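/- arXiv:2111.13994 — 2 statements merged into one kernel-verified Lean document; each statement's English description precedes it below -/
import Mathlib

section
/- For every positive natural number L, define Y(L) = Σ_j (-1)^j q^(2j²+j) [2L choose L-2j-1]_q. Then Y(L) = (1-q^L) ∏_{k=1}^{L-1} (1+q^(2k)). -/
open LaurentPolynomial Finset

noncomputable section

/-- Gaussian binomial coefficient with natural indices, in base `x`, defined by the
`q`-Pascal recurrence `[n+1, k+1] = [n, k] + x^(k+1) * [n, k+1]`.  It vanishes for `k > n`. -/
def gaussAux (x : LaurentPolynomial ℤ) : ℕ → ℕ → LaurentPolynomial ℤ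
  | _, 0 => 1
  | 0, _ + 1 => 0
  | n + 1, k + 1 => gaussAux x n k + x ^ (k + 1) * gaussAux x n (k + 1)

/-- The Gaussian binomial coefficient `[n choose k]` in base `x`, for integer indices:
it is zero when `n < 0` or `k < 0` (and, by `gaussAux`, also when `k > n`). -/
def qbin (x : LaurentPolynomial ℤ) (n k : ℤ) : LaurentPolynomial ℤ :=
  if 0 ≤ n ∧ 0 ≤ k then gaussAux x n.toNat k.toNat else 0

/-- `(-1)^j` for an integer `j`, as a Laurent polynomial. -/
def m1 (j : ℤ) : LaurentPolynomial ℤ := ((((-1 : ℤˣ) ^ j : ℤˣ) : ℤ) : LaurentPolynomial ℤ)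

/-!
Put `S(n, a, c) = ∑ⱼ (-1)^j q^(2j² + aj) [n, c - 2j]`, so that the sum of the theorem is
`Y_L = S(2L, 1, L - 1)`; let also `B_L = S(2L, 1, L)`. The two `q`-Pascal rules, the symmetry
`[n, k] = [n, n - k]` (which sends `S(n, a, c)` to `S(n, -a, n - c)`) and the shift `j ↦ j + 1`
(which relates `S(n, a - 4, c)` to `S(n, a, c - 2)`) express `Y_{L+1}` and `B_{L+1}` linearly in
`Y_L` and `B_L`. The products `(1 ∓ q^L) ∏_{k=1}^{L-1} (1 + q^(2k))` satisfy the same recursion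
and agree with `Y_1, B_1`.
-/

open Function

theorem T_mul_T_eq {R : Type*} [Semiring R] {a b c d : ℤ} (h : a + b = c + d) :
    (T a * T b : LaurentPolynomial R) = T c * T d := by
  rw [← T_add, ← T_add, h]

section GaussBinomial

variable (x : LaurentPolynomial ℤ)

theorem gaussAux_eq_zero_of_lt : ∀ {n k : ℕ}, n < k → gaussAux x n k = 0
  | 0, _ + 1, _ => rfl
  | n + 1, k + 1, h => by
    rw [gaussAux, gaussAux_eq_zero_of_lt (by omega), gaussAux_eq_zero_of_lt (by omega), mul_zero,
      add_zero]

theorem qbin_eq_zero_of_neg {n k : ℤ} (hk : k < 0) : qbin x n k = 0 :=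
  if_neg (by omega)

theorem qbin_eq_zero_of_lt {n k : ℤ} (h : n < k) : qbin x n k = 0 := by
  unfold qbin
  split_ifs
  · exact gaussAux_eq_zero_of_lt x (by omega)
  · rfl

theorem qbin_zero_right {n : ℤ} (hn : 0 ≤ n) : qbin x n 0 = 1 := by
  rw [qbin, if_pos ⟨hn, le_rfl⟩, Int.toNat_zero, gaussAux]

theorem qbin_zero_left (k : ℤ) : qbin x 0 k = if k = 0 then 1 else 0 := by
  split_ifs with hk
  · exact hk ▸ qbin_zero_right x le_rfl
  · rcases lt_or_gt_of_ne hk with hk | hk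
    · exact qbin_eq_zero_of_neg x hk
    · exact qbin_eq_zero_of_lt x hk

@[fun_prop]
theorem hasFiniteSupport_qbin_sub_two_mul (n c : ℤ) :
    HasFiniteSupport fun j : ℤ => qbin x n (c - 2 * j) := by
  refine (Set.finite_Icc (min 0 (c - n)) (max 0 c)).subset fun j hj => ?_
  have h0 : ¬ c - 2 * j < 0 := fun h => hj (qbin_eq_zero_of_neg x h)
  have hn : ¬ n < c - 2 * j := fun h => hj (qbin_eq_zero_of_lt x h)
  simp only [Set.mem_Icc]
  omega

end GaussBinomial

theorem qbin_succ (n : ℕ) (k : ℤ) :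
    qbin (T 1) (n + 1) k = qbin (T 1) n (k - 1) + T k * qbin (T 1) n k := by
  rcases lt_trichotomy k 0 with hk | rfl | hk
  · rw [qbin_eq_zero_of_neg _ hk, qbin_eq_zero_of_neg _ (by omega), qbin_eq_zero_of_neg _ hk,
      mul_zero, add_zero]
  · rw [qbin_zero_right _ (by omega), qbin_eq_zero_of_neg _ (by omega), qbin_zero_right _ (by omega),
      T_zero, zero_add, one_mul]
  · obtain ⟨m, rfl⟩ : ∃ m : ℕ, k = m + 1 := ⟨(k - 1).toNat, by omega⟩
    simp only [qbin, add_sub_cancel_right]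
    rw [if_pos (by omega), if_pos (by omega), if_pos (by omega)]
    simp only [Int.toNat_natCast, Int.toNat_natCast_add_one, gaussAux, T_pow, mul_one,
      Nat.cast_add, Nat.cast_one]

theorem qbin_succ' (n : ℕ) (k : ℤ) :
    qbin (T 1) (n + 1) k = T (n + 1 - k) * qbin (T 1) n (k - 1) + qbin (T 1) n k := by
  induction n generalizing k with
  | zero =>
    rw [qbin_succ, Nat.cast_zero, qbin_zero_left, qbin_zero_left]
    split_ifs <;> simp_all [sub_eq_zero, T_zero]
  | succ n ih =>
    have h1 := ih (k - 1)
    have h2 := ih k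
    have h3 := qbin_succ n (k - 1)
    have h4 := qbin_succ n k
    have hT : (T (n + 2 - k) * T (k - 1) : LaurentPolynomial ℤ) = T k * T (n + 1 - k) :=
      T_mul_T_eq (by ring)
    rw [qbin_succ, Nat.cast_succ]
    linear_combination (norm := ring_nf) h1 + T k * h2 - T (n + 2 - k) * h3 - h4 -
      qbin (T 1) n (k - 1) * hT

theorem qbin_symm (n : ℕ) (k : ℤ) : qbin (T 1) n k = qbin (T 1) n (n - k) := by
  induction n generalizing k with
  | zero => simp [qbin_zero_left]
  | succ n ih =>
    rw [Nat.cast_succ, qbin_succ, qbin_succ', ih k, ih (k - 1)]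
    ring_nf

theorem m1_zero : m1 0 = 1 := by simp [m1]

theorem m1_add_one (j : ℤ) : m1 (j + 1) = -m1 j := by
  simp [m1, zpow_add_one]

theorem m1_neg (j : ℤ) : m1 (-j) = m1 j := by
  simp [m1]

def altSum (n : ℕ) (a c : ℤ) : LaurentPolynomial ℤ :=
  ∑ᶠ j : ℤ, m1 j * T (2 * j ^ 2 + a * j) * qbin (T 1) n (c - 2 * j)

theorem altSum_succ (n : ℕ) (a c : ℤ) :
    altSum (n + 1) a c = altSum n a (c - 1) + T c * altSum n (a - 2) c := by
  simp only [altSum, mul_finsum]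
  rw [← finsum_add_distrib (by fun_prop) (by fun_prop)]
  refine finsum_congr fun j => ?_
  have hT : (T (2 * j ^ 2 + a * j) * T (c - 2 * j) : LaurentPolynomial ℤ) =
      T c * T (2 * j ^ 2 + (a - 2) * j) :=
    T_mul_T_eq (by ring)
  rw [Nat.cast_succ, qbin_succ]
  linear_combination (norm := ring_nf) m1 j * qbin (T 1) n (c - 2 * j) * hT

theorem altSum_succ' (n : ℕ) (a c : ℤ) :
    altSum (n + 1) a c = T (n + 1 - c) * altSum n (a + 2) (c - 1) + altSum n a c := by
  simp only [altSum, mul_finsum]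
  rw [← finsum_add_distrib (by fun_prop) (by fun_prop)]
  refine finsum_congr fun j => ?_
  have hT : (T (2 * j ^ 2 + a * j) * T (n + 1 - (c - 2 * j)) : LaurentPolynomial ℤ) =
      T (n + 1 - c) * T (2 * j ^ 2 + (a + 2) * j) :=
    T_mul_T_eq (by ring)
  rw [Nat.cast_succ, qbin_succ']
  linear_combination (norm := ring_nf) m1 j * qbin (T 1) n (c - 2 * j - 1) * hT

theorem altSum_sub_four (n : ℕ) (a c : ℤ) :
    altSum n (a - 4) c = -(T (a - 2) * altSum n a (c - 2)) := by
  rw [altSum, altSum, mul_finsum, ← finsum_neg_distrib,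
    ← finsum_comp_equiv (Equiv.addRight (1 : ℤ))]
  refine finsum_congr fun j => ?_
  have hT : (T (2 * (j + 1) ^ 2 + (a - 4) * (j + 1)) : LaurentPolynomial ℤ) =
      T (a - 2) * T (2 * j ^ 2 + a * j) := by
    rw [← T_add]; ring_nf
  simp only [Equiv.coe_addRight]
  rw [hT, m1_add_one]
  ring_nf

theorem altSum_reflect (n : ℕ) (a c : ℤ) : altSum n a c = altSum n (-a) (n - c) := by
  rw [altSum, altSum, ← finsum_comp_equiv (Equiv.neg ℤ)]
  refine finsum_congr fun j => ?_
  simp only [Equiv.neg_apply, m1_neg]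
  rw [qbin_symm]
  ring_nf

theorem altSum_zero_zero (a : ℤ) : altSum 0 a 0 = 1 := by
  rw [altSum, finsum_eq_single _ 0 fun j hj => by simp [qbin_zero_left, hj]]
  simp [m1_zero, qbin_zero_left]

theorem altSum_zero_of_odd (a : ℤ) {c : ℤ} (hc : Odd c) : altSum 0 a c = 0 := by
  refine finsum_eq_zero_of_forall_eq_zero fun j => ?_
  rw [Nat.cast_zero, qbin_zero_left, if_neg (by obtain ⟨i, rfl⟩ := hc; omega), mul_zero]

theorem altSum_two_mul_add_two (L : ℕ) :
    altSum (2 * L + 2) 1 L = (1 - T (2 * L + 1)) * altSum (2 * L) 1 L -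
      (T L + T (L + 1)) * altSum (2 * L) 1 (L - 1) := by
  -- Pascal down to `n = 2L` leaves `S(2L, 5, L - 2)` and `S(2L, 3, L - 1)`; the shift and the
  -- reflection turn these into multiples of `B_L` and `Y_L`.
  have e1 := altSum_succ' (2 * L + 1) 1 L
  have e2 := altSum_succ' (2 * L) 3 (L - 1)
  have e3 := altSum_succ' (2 * L) 1 L
  have e4 := altSum_sub_four (2 * L) 5 L
  have e5 := altSum_reflect (2 * L) 3 (L - 1)
  have e6 := altSum_sub_four (2 * L) 1 (L + 1)
  have hT1 : (T (L + 2) * T (L + 2) : LaurentPolynomial ℤ) = T (2 * L + 1) * T 3 :=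
    T_mul_T_eq (by ring)
  have hT2 : (T (L + 2) * T (-1) : LaurentPolynomial ℤ) = T (L + 1) := by
    rw [← T_add]; ring_nf
  have hT3 : (T (L + 1) * T (-1) : LaurentPolynomial ℤ) = T L := by
    rw [← T_add]; ring_nf
  push_cast at e1 e2 e3 e5
  linear_combination (norm := ring_nf) e1 + T (L + 2) * e2 + e3 +
    altSum (2 * L) 5 (L - 2) * hT1 + T (2 * L + 1) * e4 + (T (L + 2) + T (L + 1)) * (e5 + e6) -
    altSum (2 * L) 1 (L - 1) * (hT2 + hT3)

theorem altSum_two_mul_add_two_add_one (L : ℕ) :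
    altSum (2 * L + 2) 1 (L + 1) = (1 - T (2 * L + 1)) * altSum (2 * L) 1 (L - 1) +
      (T L + T (L + 1)) * altSum (2 * L) 1 L := by
  have e1 := altSum_succ (2 * L + 1) 1 (L + 1)
  have e2 := altSum_succ (2 * L) 1 L
  have e3 := altSum_succ (2 * L) (-1) (L + 1)
  have e4 := altSum_reflect (2 * L) (-1) L
  have e5 := altSum_sub_four (2 * L) 1 (L + 1)
  have hT1 : (T (L + 1) * T (-1) : LaurentPolynomial ℤ) = T L := by
    rw [← T_add]; ring_nf
  have hT2 : (T (L + 1) * T L : LaurentPolynomial ℤ) = T (2 * L + 1) := by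
    rw [← T_add]; ring_nf
  push_cast at e1 e4
  linear_combination (norm := ring_nf) e1 + e2 + T (L + 1) * e3 + (T L + T (L + 1)) * e4 +
    T (L + 1) ^ 2 * e5 - T (L + 1) * altSum (2 * L) 1 (L - 1) * hT1 -
    altSum (2 * L) 1 (L - 1) * hT2

theorem altSum_two_mul_eq_prod {L : ℕ} (hL : 1 ≤ L) :
    altSum (2 * L) 1 (L - 1) = (1 - T L) * ∏ k ∈ Finset.Icc 1 (L - 1), (1 + T (2 * (k : ℤ))) ∧
      altSum (2 * L) 1 L = (1 + T L) * ∏ k ∈ Finset.Icc 1 (L - 1), (1 + T (2 * (k : ℤ))) := by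
  induction L, hL using Nat.le_induction with
  | base =>
    have hY := altSum_two_mul_add_two 0
    have hB := altSum_two_mul_add_two_add_one 0
    simp [altSum_zero_zero, altSum_zero_of_odd, T_zero] at hY hB ⊢
    exact ⟨hY, hB⟩
  | succ L hL ih =>
    obtain ⟨hY, hB⟩ := ih
    have hP : ∏ k ∈ Finset.Icc 1 L, (1 + T (2 * (k : ℤ)) : LaurentPolynomial ℤ) =
        (∏ k ∈ Finset.Icc 1 (L - 1), (1 + T (2 * (k : ℤ)))) * (1 + T (2 * L)) := by
      obtain ⟨m, rfl⟩ := Nat.exists_eq_add_of_le' hL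
      rw [Nat.add_sub_cancel, Finset.prod_Icc_succ_top (by omega)]
    set P : LaurentPolynomial ℤ := ∏ k ∈ Finset.Icc 1 (L - 1), (1 + T (2 * (k : ℤ)))
    have hT1 : (T L * T L : LaurentPolynomial ℤ) = T (2 * L) := by rw [← T_add]; ring_nf
    have hT2 : (T L * T (L + 1) : LaurentPolynomial ℤ) = T (2 * L + 1) := by rw [← T_add]; ring_nf
    have hT3 : (T (2 * L + 1) * T L : LaurentPolynomial ℤ) = T (L + 1) * T (2 * L) :=
      T_mul_T_eq (by ring)
    rw [show 2 * (L + 1) = 2 * L + 2 by ring, Nat.add_sub_cancel, hP, Nat.cast_succ,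
      add_sub_cancel_right, altSum_two_mul_add_two, altSum_two_mul_add_two_add_one, hY, hB]
    constructor
    · linear_combination P * hT1 + P * hT2 - P * hT3
    · linear_combination P * hT1 + P * hT2 + P * hT3

theorem stmt7_general (L : ℕ) :
    (∑ᶠ j : ℤ, m1 j * T (2 * j ^ 2 + j) * qbin (T 1) (2 * L) (L - 2 * j - 1)) =
      (1 - T L) * ∏ k ∈ Finset.Icc 1 (L - 1), (1 + T (2 * (k : ℤ))) := by
  have hsum : (∑ᶠ j : ℤ, m1 j * T (2 * j ^ 2 + j) * qbin (T 1) (2 * L) (L - 2 * j - 1)) =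
      altSum (2 * L) 1 (L - 1) :=
    finsum_congr fun j => by push_cast; ring_nf
  rw [hsum]
  rcases Nat.eq_zero_or_pos L with rfl | hL
  · simp [altSum_zero_of_odd, T_zero]
  · exact (altSum_two_mul_eq_prod hL).1

theorem stmt7 (L : ℕ) (hL : 0 < L) :
    (∑ᶠ j : ℤ, m1 j * T (2 * j ^ 2 + j) * qbin (T 1) (2 * L) (L - 2 * j - 1)) =
      (1 - T L) * ∏ k ∈ Finset.Icc 1 (L - 1), (1 + T (2 * (k : ℤ))) :=
  stmt7_general L
end
end

section
/- For every positive natural number L, define Z(L) = Σ_j (-1)^j q^(2j²-j) [2L+1 choose L-2j]_q. Then 2·Z(L) = (-1;q²)_L (1 + q^L + q^(L+1) - q^(2L+1)), where (-1;q²)_L = ∏_{k=0}^{L-1}(1+q^(2k)) = 2∏_{k=1}^{L-1}(1+q^(2k)). -/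
open LaurentPolynomial Finset

noncomputable section

/-!
Write `k = L - 2j`. For `y = ±i`, the sums
`(-y)^L q^C(L,2) ∑_k [2L+1 choose k] q^C(k,2) (y q^(1-L))^k`
add up to `2 Z(L)`: the summands with `k ≢ L (mod 2)` cancel, the others agree with twice the
summand of `Z(L)` since `C(L,2) + C(k,2) + k(1-L) = 2j² - j`. By the `q`-binomial theorem each
inner sum is `∏_{s ≤ 2L} (1 + y q^(s+1-L))`. Pair the factors with exponents `±m`: since
`y² = -1`, `(1 + y q^(-m))(1 + y q^m) = y q^(-m) (1 + q^(2m))`, and the product collapses to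
`(1 - y) ∏_{m=1}^{L-1} (1 + q^(2m)) (1 + y q^L)(1 + y q^(L+1))`. Adding the terms for `y` and `-y`
gives the claim. The computation takes place in `ℤ[i][q, q⁻¹]`, into which `ℤ[q, q⁻¹]`
embeds.
-/

section QBinomial

variable {R S : Type*} [CommSemiring R] [CommSemiring S]

def qBinomial (q : R) : ℕ → ℕ → R
  | _, 0 => 1
  | 0, _ + 1 => 0
  | n + 1, k + 1 => qBinomial q n k + q ^ (k + 1) * qBinomial q n (k + 1)

@[simp] lemma qBinomial_zero_right (q : R) (n : ℕ) : qBinomial q n 0 = 1 := by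
  cases n <;> rfl

lemma qBinomial_succ_succ (q : R) (n k : ℕ) :
    qBinomial q (n + 1) (k + 1) = qBinomial q n k + q ^ (k + 1) * qBinomial q n (k + 1) :=
  rfl

lemma qBinomial_eq_zero_of_lt (q : R) {n k : ℕ} (h : n < k) : qBinomial q n k = 0 := by
  obtain ⟨k, rfl⟩ := Nat.exists_eq_add_one_of_ne_zero (Nat.ne_zero_of_lt h)
  induction n generalizing k with
  | zero => rfl
  | succ n ih =>
    rw [qBinomial_succ_succ, ih k (by omega)]
    cases k with
    | zero => omega
    | succ k => rw [ih k (by omega), mul_zero, add_zero]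

lemma map_qBinomial (f : R →+* S) (q : R) (n k : ℕ) :
    f (qBinomial q n k) = qBinomial (f q) n k := by
  induction n generalizing k with
  | zero => cases k <;> simp [qBinomial]
  | succ n ih => cases k <;> simp [qBinomial_succ_succ, ih]

lemma pow_choose_two_succ (q : R) (k : ℕ) : q ^ (k + 1).choose 2 = q ^ k.choose 2 * q ^ k := by
  rw [Nat.choose_succ_succ', Nat.choose_one_right, pow_add, mul_comm]

theorem sum_range_qBinomial_mul_pow (q t : R) (n : ℕ) :
    ∑ k ∈ range (n + 1), qBinomial q n k * q ^ k.choose 2 * t ^ k =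
      ∏ s ∈ range n, (1 + t * q ^ s) := by
  induction n generalizing t with
  | zero => simp
  | succ n ih =>
    -- `∑ G` is the sum for `n` at `t * q`; the `q`-Pascal rule turns the sum for `n + 1`
    -- into `(1 + t) ∑ G`.
    set G := fun k => qBinomial q n k * q ^ (k + 1).choose 2 * t ^ k
    have hG : ∑ k ∈ range (n + 1), G k = ∏ s ∈ range n, (1 + t * q ^ (s + 1)) := by
      rw [prod_congr rfl fun s _ => show 1 + t * q ^ (s + 1) = 1 + t * q * q ^ s by ring, ← ih]
      exact sum_congr rfl fun k _ => by simp only [G, pow_choose_two_succ]; ring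
    have hshift :
        1 + ∑ k ∈ range (n + 1), qBinomial q n (k + 1) * q ^ (k + 2).choose 2 * t ^ (k + 1) =
          ∑ k ∈ range (n + 1), G k := by
      calc _ = ∑ k ∈ range (n + 1), G (k + 1) + G 0 := by rw [add_comm]; congr 1; simp [G]
        _ = ∑ k ∈ range (n + 2), G k := (sum_range_succ' G _).symm
        _ = _ := by simp [sum_range_succ, G, qBinomial_eq_zero_of_lt q n.lt_succ_self]
    calc ∑ k ∈ range (n + 2), qBinomial q (n + 1) k * q ^ k.choose 2 * t ^ k
        = 1 + ∑ k ∈ range (n + 1), (t * G k +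
            qBinomial q n (k + 1) * q ^ (k + 2).choose 2 * t ^ (k + 1)) := by
          rw [sum_range_succ', add_comm]
          simp only [G, qBinomial_succ_succ, qBinomial_zero_right]
          refine congr_arg₂ _ (by simp) (sum_congr rfl fun k _ => ?_)
          rw [pow_choose_two_succ q (k + 1)]
          ring
      _ = (1 + t) * ∑ k ∈ range (n + 1), G k := by
          rw [sum_add_distrib, ← mul_sum, ← hshift]; ring
      _ = ∏ s ∈ range (n + 1), (1 + t * q ^ s) := by rw [hG, prod_range_succ']; simp [mul_comm]

end QBinomial

lemma gaussAux_eq_qBinomial (x : LaurentPolynomial ℤ) (n k : ℕ) :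
    gaussAux x n k = qBinomial x n k := by
  induction n generalizing k with
  | zero => cases k <;> rfl
  | succ n ih => cases k <;> simp [gaussAux, qBinomial_succ_succ, ih]

lemma qbin_natCast (x : LaurentPolynomial ℤ) (n k : ℕ) : qbin x n k = qBinomial x n k := by
  simp [qbin, gaussAux_eq_qBinomial]

lemma qbin_eq_zero (x : LaurentPolynomial ℤ) {n k : ℤ} (h : k < 0 ∨ n < k) :
    qbin x n k = 0 := by
  unfold qbin
  split_ifs
  · rw [gaussAux_eq_qBinomial, qBinomial_eq_zero_of_lt x (by omega)]
  · rfl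

lemma m1_eq_neg_one_pow {j : ℤ} {a b : ℕ} (h : j + b = a) : m1 j = (-1) ^ (a + b) := by
  have hu : (-1 : ℤˣ) ^ j = (-1) ^ (a + b) := by
    rw [← zpow_natCast, Nat.cast_add, ← h, add_assoc, ← two_mul, zpow_add, zpow_mul]
    simp
  simp [m1, hu]

lemma choose_two_add_choose_two_add_mul {L k : ℕ} {j : ℤ} (hj : (L : ℤ) - 2 * j = k) :
    ((L.choose 2 : ℕ) : ℤ) + (k.choose 2 : ℕ) + k * (1 - L) = 2 * j ^ 2 - j := by
  have hk : (k : ℚ) = L - 2 * j := by exact_mod_cast hj.symm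
  have hq : ((L.choose 2 : ℕ) : ℚ) + (k.choose 2 : ℕ) + k * (1 - L) = 2 * j ^ 2 - j := by
    rw [Nat.cast_choose_two, Nat.cast_choose_two, hk]
    ring
  exact_mod_cast hq

lemma finsum_eq_sum_range_sub_two_mul {M : Type*} [AddCommMonoid M] (f : ℤ → M) (L N : ℕ)
    (hf : ∀ j, f j ≠ 0 → 0 ≤ (L : ℤ) - 2 * j ∧ (L : ℤ) - 2 * j < N) :
    ∑ᶠ j, f j = ∑ k ∈ range N, if Even (L + k) then f (((L : ℤ) - k) / 2) else 0 := by
  classical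
  rw [← sum_filter, ← sum_image (g := fun k : ℕ => ((L : ℤ) - k) / 2)]
  · apply finsum_eq_sum_of_support_subset
    intro j hj
    obtain ⟨h0, hN⟩ := hf j hj
    simp only [coe_image, coe_filter, mem_range, Set.mem_image, Set.mem_ofPred_eq, Nat.even_iff]
    exact ⟨((L : ℤ) - 2 * j).toNat, ⟨by omega, by omega⟩, by omega⟩
  · intro k₁ hk₁ k₂ hk₂ h
    simp only [coe_filter, Set.mem_ofPred_eq, Nat.even_iff] at hk₁ hk₂ h
    omega

def castLaurent (A : Type*) [CommRing A] : LaurentPolynomial ℤ →+* LaurentPolynomial A :=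
  AddMonoidAlgebra.mapRingHom ℤ (Int.castRingHom A)

section CastLaurent

variable {A : Type*} [CommRing A]

@[simp] lemma castLaurent_T (n : ℤ) : castLaurent A (T n) = T n := by
  simp only [castLaurent, T, AddMonoidAlgebra.mapRingHom_single, map_one]

lemma castLaurent_injective [CharZero A] : Function.Injective (castLaurent A) := by
  intro p q h
  ext n
  have := congr_arg (fun p => p.coeff n) h
  simp only [castLaurent, AddMonoidAlgebra.coeff_mapRingHom, eq_intCast] at this
  exact_mod_cast this

end CastLaurent

section Twisted

variable {A : Type*} [CommRing A]

lemma neg_pow_mul_pow_add_pow_mul_neg_pow (y : A) (a b : ℕ) :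
    (-y) ^ a * y ^ b + y ^ a * (-y) ^ b = (-1) ^ a * (1 + (-1) ^ (a + b)) * y ^ (a + b) := by
  have h : ((-1 : A) ^ a) ^ 2 = 1 := by rw [← pow_mul, pow_mul', neg_one_sq, one_pow]
  rw [neg_pow, neg_pow, pow_add, pow_add]
  linear_combination (-(y ^ a * y ^ b) * (-1) ^ b) * h

lemma one_add_mul_T_neg_mul_one_add_mul_T {y : LaurentPolynomial A} (hy : y * y = -1) (m : ℤ) :
    (1 + y * T (-m)) * (1 + y * T m) = y * T (-m) * (1 + T (2 * m)) := by
  have h1 : T (-m) * T m = (1 : LaurentPolynomial A) := by rw [← T_add, neg_add_cancel, T_zero]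
  have h2 : T (-m) * T (2 * m) = (T m : LaurentPolynomial A) := by rw [← T_add]; ring_nf
  linear_combination (T (-m) * T m) * hy - h1 - y * h2

lemma prod_range_one_add_mul_T_sub {y : LaurentPolynomial A} (hy : y * y = -1) (n : ℕ) :
    ∏ s ∈ range (2 * n + 1), (1 + y * T ((s : ℤ) - n)) =
      (1 + y) * y ^ n * T (-((n + 1).choose 2 : ℕ)) *
        ∏ k ∈ range n, (1 + T (2 * (k : ℤ) + 2)) := by
  induction n with
  | zero => simp
  | succ n ih =>
    have hmid (s : ℕ) : ((s + 1 : ℕ) : ℤ) - ((n + 1 : ℕ) : ℤ) = (s : ℤ) - n := by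
      push_cast; ring
    rw [show 2 * (n + 1) + 1 = 2 * n + 1 + 1 + 1 by ring, prod_range_succ, prod_range_succ']
    simp only [hmid, ih, prod_range_succ _ n]
    rw [Nat.choose_succ_succ' (n + 1), Nat.choose_one_right]
    have hpair := one_add_mul_T_neg_mul_one_add_mul_T hy ((n : ℤ) + 1)
    push_cast at hpair ⊢
    rw [neg_add, T_add, zero_sub, show (2 * n + 1 - n : ℤ) = n + 1 by ring,
      show (2 * n + 2 : ℤ) = 2 * (n + 1) by ring, mul_assoc _ (1 + _), hpair]
    ring

/-- The `k`-th term of the `q`-binomial theorem for `[2L+1 choose k]` at `t = y q^(1-L)`,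
scaled by `(-y)^L q^C(L,2)`. -/
def qTerm (y : LaurentPolynomial A) (L k : ℕ) : LaurentPolynomial A :=
  (-y) ^ L * T (L.choose 2 : ℕ) *
    (qBinomial (T 1) (2 * L + 1) k * T 1 ^ k.choose 2 * (y * T (1 - L)) ^ k)

lemma sum_range_qTerm {y : LaurentPolynomial A} (hy : y * y = -1) (n : ℕ) :
    ∑ k ∈ range (2 * (n + 1) + 2), qTerm y (n + 1) k =
      (1 - y) * (∏ k ∈ range n, (1 + T (2 * (k : ℤ) + 2))) *
        ((1 + y * T ((n : ℤ) + 1)) * (1 + y * T ((n : ℤ) + 2))) := by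
  have hprod (s : ℕ) :
      1 + y * T (1 - ((n + 1 : ℕ) : ℤ)) * T 1 ^ s = 1 + y * T ((s : ℤ) - n) := by
    rw [T_pow, mul_assoc, ← T_add]; push_cast; ring_nf
  simp only [qTerm, ← mul_sum]
  rw [sum_range_qBinomial_mul_pow, prod_congr rfl fun s _ => hprod s,
    show 2 * (n + 1) + 1 = 2 * n + 1 + 1 + 1 by ring, prod_range_succ, prod_range_succ,
    prod_range_one_add_mul_T_sub hy]
  have hsign : (-y) ^ (n + 1) * y ^ n = -y := by
    calc (-y) ^ (n + 1) * y ^ n = -y * (-(y * y)) ^ n := by ring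
      _ = -y := by rw [hy, neg_neg, one_pow, mul_one]
  set c : ℤ := (((n + 1).choose 2 : ℕ) : ℤ)
  have hT : T c * T (-c) = (1 : LaurentPolynomial A) := by
    rw [← T_add, add_neg_cancel, T_zero]
  push_cast
  rw [show (2 * n + 1 - n : ℤ) = n + 1 by ring, show (2 * n + 2 - n : ℤ) = n + 2 by ring]
  set P := (∏ k ∈ range n, (1 + T (2 * (k : ℤ) + 2))) *
    ((1 + y * T ((n : ℤ) + 1)) * (1 + y * T ((n : ℤ) + 2)))
  linear_combination (T c * T (-c) * (1 + y) * P) * hsign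
    - (y * (1 + y) * P) * hT - P * hy

lemma sum_range_qTerm_add_qTerm_neg {y : LaurentPolynomial A} (hy : y * y = -1) (n : ℕ) :
    ∑ k ∈ range (2 * (n + 1) + 2), (qTerm y (n + 1) k + qTerm (-y) (n + 1) k) =
      (∏ k ∈ range (n + 1), (1 + T (2 * (k : ℤ)))) *
        (1 + T ((n + 1 : ℕ) : ℤ) + T (((n + 1 : ℕ) : ℤ) + 1) -
          T (2 * ((n + 1 : ℕ) : ℤ) + 1)) := by
  rw [sum_add_distrib, sum_range_qTerm hy, sum_range_qTerm (by rwa [neg_mul_neg]),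
    prod_range_succ']
  have hP : ∏ k ∈ range n, (1 + T (2 * ((k + 1 : ℕ) : ℤ))) =
      ∏ k ∈ range n, (1 + T (2 * (k : ℤ) + 2) : LaurentPolynomial A) :=
    prod_congr rfl fun k _ => by push_cast; ring_nf
  have hT : T ((n : ℤ) + 1) * T ((n : ℤ) + 2) =
      (T (2 * ((n : ℤ) + 1) + 1) : LaurentPolynomial A) := by
    rw [← T_add]; ring_nf
  rw [hP]
  push_cast
  rw [T_zero, show (n : ℤ) + 1 + 1 = n + 2 by ring, ← hT]
  linear_combination (2 * (∏ k ∈ range n, (1 + T (2 * (k : ℤ) + 2))) *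
    (T ((n : ℤ) + 1) * T ((n : ℤ) + 2) - T ((n : ℤ) + 1) - T ((n : ℤ) + 2))) * hy

lemma qTerm_add_qTerm_neg (y : LaurentPolynomial A) (L k : ℕ) :
    qTerm y L k + qTerm (-y) L k =
      ((-y) ^ L * y ^ k + y ^ L * (-y) ^ k) *
        T ((L.choose 2 : ℕ) + (k.choose 2 : ℕ) + k * (1 - L)) *
          qBinomial (T 1) (2 * L + 1) k := by
  simp only [qTerm, neg_neg, mul_pow, T_pow, mul_one, T_add]
  ring

lemma qTerm_add_qTerm_neg_of_odd (y : LaurentPolynomial A) {L k : ℕ} (h : Odd (L + k)) :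
    qTerm y L k + qTerm (-y) L k = 0 := by
  rw [qTerm_add_qTerm_neg, neg_pow_mul_pow_add_pow_mul_neg_pow, h.neg_one_pow]
  simp

lemma two_mul_castLaurent_summand {y : LaurentPolynomial A} (hy : y * y = -1) {L k : ℕ} {j : ℤ}
    (hj : (L : ℤ) - 2 * j = k) :
    2 * castLaurent A (m1 j * T (2 * j ^ 2 - j) * qbin (T 1) (2 * L + 1) (L - 2 * j)) =
      qTerm y L k + qTerm (-y) L k := by
  obtain ⟨m, hm⟩ : ∃ m, L + k = 2 * m := ⟨(L + k) / 2, by omega⟩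
  rw [qTerm_add_qTerm_neg, neg_pow_mul_pow_add_pow_mul_neg_pow, hm, pow_mul, pow_mul, neg_one_sq,
    sq y, hy, one_pow, choose_two_add_choose_two_add_mul hj,
    m1_eq_neg_one_pow (a := L) (b := m) (by omega), hj,
    show (2 * L + 1 : ℤ) = ((2 * L + 1 : ℕ) : ℤ) by push_cast; ring, qbin_natCast]
  simp only [map_mul, map_pow, map_neg, map_one, castLaurent_T, map_qBinomial]
  ring

end Twisted

theorem stmt8 (L : ℕ) (hL : 0 < L) :
    2 * (∑ᶠ j : ℤ, m1 j * T (2 * j ^ 2 - j) * qbin (T 1) (2 * L + 1) (L - 2 * j)) =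
      (∏ k ∈ Finset.range L, (1 + T (2 * (k : ℤ)))) *
        (1 + T L + T ((L : ℤ) + 1) - T (2 * L + 1)) := by
  obtain ⟨n, rfl⟩ := Nat.exists_eq_add_one_of_ne_zero hL.ne'
  set y : LaurentPolynomial GaussianInt := C Zsqrtd.sqrtd
  have hy : y * y = -1 := by rw [← map_mul, Zsqrtd.dmuld]; simp
  have hsupp (j : ℤ) (hj : m1 j * T (2 * j ^ 2 - j) *
      qbin (T 1) (2 * ((n + 1 : ℕ) : ℤ) + 1) ((n + 1 : ℕ) - 2 * j) ≠ 0) :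
      0 ≤ ((n + 1 : ℕ) : ℤ) - 2 * j ∧
        ((n + 1 : ℕ) : ℤ) - 2 * j < (2 * (n + 1) + 2 : ℕ) := by
    by_contra h
    exact hj (by rw [qbin_eq_zero _ (by omega), mul_zero])
  apply castLaurent_injective (A := GaussianInt)
  rw [finsum_eq_sum_range_sub_two_mul _ _ _ hsupp, map_mul, map_ofNat, map_sum, mul_sum]
  calc _ = ∑ k ∈ range (2 * (n + 1) + 2), (qTerm y (n + 1) k + qTerm (-y) (n + 1) k) := by
        refine sum_congr rfl fun k _ => ?_
        split_ifs with hk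
        · exact two_mul_castLaurent_summand hy (by rw [Nat.even_iff] at hk; omega)
        · rw [map_zero, mul_zero, qTerm_add_qTerm_neg_of_odd y (Nat.not_even_iff_odd.mp hk)]
    _ = _ := by
        rw [sum_range_qTerm_add_qTerm_neg hy]
        simp only [map_mul, map_prod, map_add, map_sub, map_one, castLaurent_T]
end
end
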